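/- Let α : ℝ → ℝ be continuous, bounded, nonnegative, and for l > 0 let 𝒢*[l] be as above. Then for every l₀ > 0 and every l ≥ l₀: 𝒢*[l] ≥ 𝒢*[l₀] + 2·ᾱ·(l - l₀), where ᾱ = sup_{x ∈ [0,l₀]} α(ȳ(x)) for any maximizer ȳ of the variational problem at length l₀. -/

import Mathlib

/-!
Pick `x₀ ∈ [0, l₀]` where `α ∘ ȳ` attains its maximum `ᾱ`, and splice a horizontal segment of
length `l - l₀` into `ȳ` at `x₀`. The new curve is still 1-Lipschitz with zero boundary values,
on the flat piece the integrand is `α(ȳ(x₀)) · γ(0) = 2ᾱ`, and the two remaining pieces are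
translates of `ȳ` contributing `𝒢[ȳ]`. Hence `𝒢*[l] ≥ 𝒢[ȳ] + 2ᾱ (l - l₀)`.
-/

open MeasureTheory intervalIntegral Set Filter

def insertFlat (f : ℝ → ℝ) (x₀ d : ℝ) (x : ℝ) : ℝ := f (max (min x x₀) (x - d))

section insertFlat

variable {f : ℝ → ℝ} {x₀ d x : ℝ}

theorem insertFlat_of_le (hd : 0 ≤ d) (hx : x ≤ x₀) : insertFlat f x₀ d x = f x := by
  rw [insertFlat, min_eq_left hx, max_eq_left (by linarith)]

theorem insertFlat_of_mem_Icc (hx : x ∈ Icc x₀ (x₀ + d)) : insertFlat f x₀ d x = f x₀ := by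
  rw [insertFlat, min_eq_right hx.1, max_eq_left (by linarith [hx.2])]

theorem insertFlat_of_ge (hx : x₀ + d ≤ x) : insertFlat f x₀ d x = f (x - d) := by
  rw [insertFlat, max_eq_right ((min_le_right _ _).trans (by linarith))]

theorem deriv_insertFlat_of_lt (hd : 0 ≤ d) (hx : x < x₀) :
    deriv (insertFlat f x₀ d) x = deriv f x :=
  (eventuallyEq_of_mem (Iio_mem_nhds hx) fun _ hz => insertFlat_of_le hd (le_of_lt hz)).deriv_eq

theorem deriv_insertFlat_of_mem_Ioo (hx : x ∈ Ioo x₀ (x₀ + d)) :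
    deriv (insertFlat f x₀ d) x = 0 := by
  rw [(eventuallyEq_of_mem (Ioo_mem_nhds hx.1 hx.2) fun _ hz =>
    insertFlat_of_mem_Icc (Ioo_subset_Icc_self hz)).deriv_eq, deriv_const]

theorem deriv_insertFlat_of_gt (hx : x₀ + d < x) :
    deriv (insertFlat f x₀ d) x = deriv f (x - d) := by
  rw [(eventuallyEq_of_mem (Ioi_mem_nhds hx) fun _ hz => insertFlat_of_ge (le_of_lt hz)).deriv_eq,
    deriv_comp_sub_const]

theorem LipschitzOnWith.insertFlat {K : NNReal} {a b : ℝ} (hf : LipschitzOnWith K f (Icc a b))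
    (hax : a ≤ x₀) (hxb : x₀ ≤ b) : LipschitzOnWith K (insertFlat f x₀ d) (Icc a (b + d)) := by
  have hsub : LipschitzWith 1 fun x : ℝ => x - d :=
    LipschitzWith.of_dist_le_mul fun x y => by simp
  have hφ : LipschitzWith 1 fun x : ℝ => max (min x x₀) (x - d) := by
    simpa using (LipschitzWith.id.min_const x₀).max hsub
  have hmaps : MapsTo (fun x => max (min x x₀) (x - d)) (Icc a (b + d)) (Icc a b) := fun x hx =>
    ⟨le_max_of_le_left (le_min hx.1 hax), max_le ((min_le_right _ _).trans hxb) (by linarith [hx.2])⟩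
  have h := hf.comp hφ.lipschitzOnWith hmaps
  rwa [mul_one] at h

theorem integral_insertFlat (L : ℝ → ℝ → ℝ) {a b : ℝ} (hax : a ≤ x₀) (hxb : x₀ ≤ b) (hd : 0 ≤ d)
    (hL : IntervalIntegrable (fun x => L (f x) (deriv f x)) volume a b) :
    ∫ x in a..b + d, L (insertFlat f x₀ d x) (deriv (insertFlat f x₀ d) x)
      = (∫ x in a..b, L (f x) (deriv f x)) + d * L (f x₀) 0 := by
  set F := fun x => L (insertFlat f x₀ d x) (deriv (insertFlat f x₀ d) x)
  set F₀ := fun x => L (f x) (deriv f x)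
  have left : EqOn F F₀ (Ioo a x₀) := fun x hx => by
    simp only [F, F₀, insertFlat_of_le hd hx.2.le, deriv_insertFlat_of_lt hd hx.2]
  have flat : EqOn F (fun _ => L (f x₀) 0) (Ioo x₀ (x₀ + d)) := fun x hx => by
    simp only [F, insertFlat_of_mem_Icc (Ioo_subset_Icc_self hx), deriv_insertFlat_of_mem_Ioo hx]
  have right : EqOn F (fun x => F₀ (x - d)) (Ioo (x₀ + d) (b + d)) := fun x hx => by
    simp only [F, F₀, insertFlat_of_ge hx.1.le, deriv_insertFlat_of_gt hx.1]
  have hL₁ : IntervalIntegrable F₀ volume a x₀ := hL.mono_set (by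
    rw [uIcc_of_le hax, uIcc_of_le (hax.trans hxb)]; exact Icc_subset_Icc_right hxb)
  have hL₂ : IntervalIntegrable F₀ volume x₀ b := hL.mono_set (by
    rw [uIcc_of_le hxb, uIcc_of_le (hax.trans hxb)]; exact Icc_subset_Icc_left hax)
  have i₁ : IntervalIntegrable F volume a x₀ :=
    hL₁.congr_uIoo (by rw [uIoo_of_le hax]; exact left.symm)
  have i₂ : IntervalIntegrable F volume x₀ (x₀ + d) :=
    intervalIntegrable_const.congr_uIoo (by rw [uIoo_of_le (by linarith)]; exact flat.symm)
  have i₃ : IntervalIntegrable F volume (x₀ + d) (b + d) :=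
    (hL₂.comp_sub_right d).congr_uIoo (by rw [uIoo_of_le (by linarith)]; exact right.symm)
  rw [← integral_add_adjacent_intervals i₁ (i₂.trans i₃), ← integral_add_adjacent_intervals i₂ i₃,
    integral_congr_Ioo_of_le hax left, integral_congr_Ioo_of_le (by linarith) flat,
    integral_congr_Ioo_of_le (by linarith) right, integral_comp_sub_right, add_sub_cancel_right,
    add_sub_cancel_right, intervalIntegral.integral_const,
    ← integral_add_adjacent_intervals hL₁ hL₂]
  simp only [add_sub_cancel_left, smul_eq_mul]
  ring

end insertFlat

theorem one_add_sqrt_one_sub_sq_le_two (w : ℝ) : 1 + √(1 - w ^ 2) ≤ 2 := by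
  linarith [Real.sqrt_le_one.mpr (by nlinarith [sq_nonneg w] : 1 - w ^ 2 ≤ 1)]

section Action

variable {α y : ℝ → ℝ} {a b : ℝ}

theorem intervalIntegrable_mul_one_add_sqrt (hα : Continuous α) (hy : ContinuousOn y (uIcc a b)) :
    IntervalIntegrable (fun x => α (y x) * (1 + √(1 - deriv y x ^ 2))) volume a b := by
  have hγ : IntervalIntegrable (fun x => 1 + √(1 - deriv y x ^ 2)) volume a b := by
    rw [intervalIntegrable_iff]
    refine Measure.integrableOn_of_bounded (M := 2) measure_Ioc_lt_top.ne ?_ (ae_of_all _ fun x => ?_)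
    · exact (measurable_const.add
        ((measurable_const.sub ((measurable_deriv y).pow_const 2)).sqrt)).aestronglyMeasurable
    · rw [Real.norm_of_nonneg (by positivity)]
      exact one_add_sqrt_one_sub_sq_le_two _
  exact hγ.continuousOn_mul (hα.comp_continuousOn hy)

theorem integral_mul_one_add_sqrt_le (hα : Continuous α) {M : ℝ} (hM : ∀ t, α t ≤ M) (hab : a ≤ b)
    (hy : ContinuousOn y (Icc a b)) :
    ∫ x in a..b, α (y x) * (1 + √(1 - deriv y x ^ 2)) ≤ 2 * max M 0 * (b - a) := by
  have hle (x : ℝ) : α (y x) * (1 + √(1 - deriv y x ^ 2)) ≤ 2 * max M 0 := by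
    nlinarith [hM (y x), le_max_left M 0, le_max_right M 0,
      one_add_sqrt_one_sub_sq_le_two (deriv y x), Real.sqrt_nonneg (1 - deriv y x ^ 2)]
  calc _ ≤ ∫ _ in a..b, 2 * max M 0 :=
        integral_mono_on hab (intervalIntegrable_mul_one_add_sqrt hα (by rwa [uIcc_of_le hab]))
          intervalIntegrable_const fun x _ => hle x
    _ = _ := by rw [intervalIntegral.integral_const, smul_eq_mul, mul_comm]

end Action

theorem Gstar_supporting_line_general (α : ℝ → ℝ) (hαc : Continuous α) (hαb : ∃ M, ∀ y, α y ≤ M)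
    (l₀ : ℝ) (hl₀ : 0 < l₀) (ybar : ℝ → ℝ)
    (hybar : LipschitzOnWith 1 ybar (Set.Icc 0 l₀)) (hybar0 : ybar 0 = 0) (hybarl : ybar l₀ = 0)
    (l : ℝ) (hl : l₀ ≤ l) :
    sSup {r : ℝ | ∃ y : ℝ → ℝ, LipschitzOnWith 1 y (Set.Icc 0 l) ∧ y 0 = 0 ∧ y l = 0 ∧
        r = ∫ x in (0 : ℝ)..l, α (y x) * (1 + Real.sqrt (1 - (deriv y x) ^ 2))}
      ≥ (∫ x in (0 : ℝ)..l₀, α (ybar x) * (1 + Real.sqrt (1 - (deriv ybar x) ^ 2)))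
        + 2 * sSup ((fun x => α (ybar x)) '' Set.Icc (0 : ℝ) l₀) * (l - l₀) := by
  obtain ⟨M, hM⟩ := hαb
  obtain ⟨x₀, hx₀, hsup, -⟩ := isCompact_Icc.exists_sSup_image_eq_and_ge
    (f := fun x => α (ybar x)) (nonempty_Icc.2 hl₀.le) (hαc.comp_continuousOn hybar.continuousOn)
  have hd : 0 ≤ l - l₀ := sub_nonneg.2 hl
  have hl_eq : l₀ + (l - l₀) = l := add_sub_cancel _ _
  have hlip : LipschitzOnWith 1 (insertFlat ybar x₀ (l - l₀)) (Icc 0 l) := by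
    simpa only [hl_eq] using hybar.insertFlat (d := l - l₀) hx₀.1 hx₀.2
  have h0 : insertFlat ybar x₀ (l - l₀) 0 = 0 := (insertFlat_of_le hd hx₀.1).trans hybar0
  have hl' : insertFlat ybar x₀ (l - l₀) l = 0 := by
    rw [insertFlat_of_ge (by linarith [hx₀.2]), sub_sub_cancel, hybarl]
  have hint := integral_insertFlat (fun v w => α v * (1 + √(1 - w ^ 2))) hx₀.1 hx₀.2 hd
    (intervalIntegrable_mul_one_add_sqrt hαc (by rw [uIcc_of_le hl₀.le]; exact hybar.continuousOn))
  rw [hl_eq] at hint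
  rw [ge_iff_le, hsup]
  calc _ = ∫ x in (0 : ℝ)..l, α (insertFlat ybar x₀ (l - l₀) x) *
        (1 + √(1 - deriv (insertFlat ybar x₀ (l - l₀)) x ^ 2)) := by
        rw [hint, zero_pow two_ne_zero, sub_zero, Real.sqrt_one]; ring
    _ ≤ _ := by
        refine le_csSup ⟨2 * max M 0 * (l - 0), ?_⟩ ⟨_, hlip, h0, hl', rfl⟩
        rintro r ⟨y, hy, -, -, rfl⟩
        exact integral_mul_one_add_sqrt_le hαc hM (hl₀.le.trans hl) hy.continuousOn

/-- Supporting-line inequality: for l ≥ l₀ > 0 and any maximizer ȳ of the variational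
problem at length l₀, 𝒢*[l] ≥ 𝒢*[l₀] + 2·ᾱ·(l - l₀), where
ᾱ = sup_{x ∈ [0,l₀]} α(ȳ(x)). -/
theorem Gstar_supporting_line (α : ℝ → ℝ) (hαc : Continuous α) (hαb : ∃ M, ∀ y, α y ≤ M)
    (hα0 : ∀ y, 0 ≤ α y) (l₀ : ℝ) (hl₀ : 0 < l₀) (ybar : ℝ → ℝ)
    (hybar : LipschitzOnWith 1 ybar (Set.Icc 0 l₀)) (hybar0 : ybar 0 = 0) (hybarl : ybar l₀ = 0)
    (hmax : ∀ y : ℝ → ℝ, LipschitzOnWith 1 y (Set.Icc 0 l₀) → y 0 = 0 → y l₀ = 0 →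
      (∫ x in (0 : ℝ)..l₀, α (y x) * (1 + Real.sqrt (1 - (deriv y x) ^ 2)))
        ≤ ∫ x in (0 : ℝ)..l₀, α (ybar x) * (1 + Real.sqrt (1 - (deriv ybar x) ^ 2)))
    (l : ℝ) (hl : l₀ ≤ l) :
    sSup {r : ℝ | ∃ y : ℝ → ℝ, LipschitzOnWith 1 y (Set.Icc 0 l) ∧ y 0 = 0 ∧ y l = 0 ∧
        r = ∫ x in (0 : ℝ)..l, α (y x) * (1 + Real.sqrt (1 - (deriv y x) ^ 2))}
      ≥ (∫ x in (0 : ℝ)..l₀, α (ybar x) * (1 + Real.sqrt (1 - (deriv ybar x) ^ 2)))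
        + 2 * sSup ((fun x => α (ybar x)) '' Set.Icc (0 : ℝ) l₀) * (l - l₀) :=
  Gstar_supporting_line_general α hαc hαb l₀ hl₀ ybar hybar hybar0 hybarl l hl
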